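/- arXiv:2410.13045 — 4 statements merged into one kernel-verified Lean document; each statement's English description precedes it below -/
import Mathlib

section
/- Let L₁,…,L_K : ℝⁿ → ℝ be convex, differentiable, with α-Lipschitz gradients, and set L = (1/K)∑ₖ Lₖ. Fix a point w ∈ ℝⁿ, let Jₖ = ∇Lₖ(w), J = (1/K)∑ₖ Jₖ, σ² = (1/K)∑ₖ‖Jₖ‖² − ‖J‖², and for learning rate λ > 0 let each client update wₖ⁺ = w − λJₖ and let w⁺ = (1/K)∑ₖ wₖ⁺ be the aggregated model. Then L(w⁺) ≤ L(w) − (λ − αλ²/2)‖J‖² + (αλ²/2)σ². -/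
open InnerProductSpace

variable {E : Type*} [NormedAddCommGroup E] [InnerProductSpace ℝ E] [CompleteSpace E]

lemma curve_hasDerivAt (f : E → ℝ) (hd : Differentiable ℝ f) (x v : E) (t : ℝ) :
    HasDerivAt (fun s : ℝ => f (x + s • v)) (@inner ℝ _ _ (gradient f (x + t • v)) v) t := by
  have hc : HasDerivAt (fun s : ℝ => x + s • v) v t := by
    simpa using ((hasDerivAt_id t).smul_const v).const_add x
  have hf := (hd (x + t • v)).hasGradientAt.hasFDerivAt
  have := hf.comp_hasDerivAt t hc
  simpa [InnerProductSpace.toDual_apply_apply, Function.comp_def] using this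

lemma descent (f : E → ℝ) (hd : Differentiable ℝ f) {α : ℝ} (hα : 0 ≤ α)
    (hlip : ∀ x y, ‖gradient f x - gradient f y‖ ≤ α * ‖x - y‖) (x v : E) :
    f (x + v) ≤ f x + @inner ℝ _ _ (gradient f x) v + α / 2 * ‖v‖ ^ 2 := by
  set g : ℝ → ℝ := fun t => f (x + t • v) - t * @inner ℝ _ _ (gradient f x) v
    - α / 2 * t ^ 2 * ‖v‖ ^ 2 with hg
  have hderiv : ∀ t : ℝ, HasDerivAt g
      (@inner ℝ _ _ (gradient f (x + t • v)) v - @inner ℝ _ _ (gradient f x) v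
        - α * t * ‖v‖ ^ 2) t := by
    intro t
    have h1 := curve_hasDerivAt f hd x v t
    have h2 : HasDerivAt (fun t : ℝ => t * @inner ℝ _ _ (gradient f x) v)
        (@inner ℝ _ _ (gradient f x) v) t := by
      simpa using (hasDerivAt_id t).mul_const (@inner ℝ _ _ (gradient f x) v)
    have h3 : HasDerivAt (fun t : ℝ => α / 2 * t ^ 2 * ‖v‖ ^ 2)
        (α * t * ‖v‖ ^ 2) t := by
      have := ((hasDerivAt_pow 2 t).const_mul (α / 2)).mul_const (‖v‖ ^ 2)
      refine this.congr_deriv ?_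
      ring
    exact (h1.sub h2).sub h3
  have hanti : AntitoneOn g (Set.Icc 0 1) := by
    apply antitoneOn_of_deriv_nonpos (convex_Icc 0 1)
    · exact fun t _ => ((hderiv t).continuousAt).continuousWithinAt
    · exact fun t _ => ((hderiv t).differentiableAt).differentiableWithinAt
    · intro t ht
      rw [interior_Icc] at ht
      rw [(hderiv t).deriv]
      have h1 : @inner ℝ _ _ (gradient f (x + t • v)) v - @inner ℝ _ _ (gradient f x) v
          = @inner ℝ _ _ (gradient f (x + t • v) - gradient f x) v := by
        rw [inner_sub_left]
      rw [h1]
      have h2 : @inner ℝ _ _ (gradient f (x + t • v) - gradient f x) v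
          ≤ ‖gradient f (x + t • v) - gradient f x‖ * ‖v‖ := real_inner_le_norm _ _
      have h3 : ‖gradient f (x + t • v) - gradient f x‖ ≤ α * (t * ‖v‖) := by
        have := hlip (x + t • v) x
        simpa [norm_smul, abs_of_pos ht.1, mul_assoc] using this
      nlinarith [norm_nonneg v, ht.1.le,
        mul_le_mul_of_nonneg_right h3 (norm_nonneg v)]
  have := hanti (Set.left_mem_Icc.2 zero_le_one) (Set.right_mem_Icc.2 zero_le_one) zero_le_one
  simp only [hg] at this
  norm_num at this
  linarith [inner_gradient_left (𝕜 := ℝ) (f := f) (x := x) (y := v)]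

/-- One round of single-step federated gradient descent with averaging:
the federated loss of the aggregated model is bounded using the cross-client
averaged Jacobian norm and the cross-client Jacobian variance. -/
theorem fed_one_round_bound {n K : ℕ} (hK : 0 < K) (α lr : ℝ) (hα : 0 < α) (hlr : 0 < lr)
    (L : Fin K → EuclideanSpace ℝ (Fin n) → ℝ)
    (hconv : ∀ k, ConvexOn ℝ Set.univ (L k))
    (hdiff : ∀ k, Differentiable ℝ (L k))
    (hlip : ∀ k w₁ w₂, ‖gradient (L k) w₁ - gradient (L k) w₂‖ ≤ α * ‖w₁ - w₂‖)
    (w : EuclideanSpace ℝ (Fin n)) :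
    (K : ℝ)⁻¹ * ∑ k, L k ((K : ℝ)⁻¹ • ∑ j, (w - lr • gradient (L j) w)) ≤
      (K : ℝ)⁻¹ * ∑ k, L k w
        - (lr - α * lr ^ 2 / 2) * ‖(K : ℝ)⁻¹ • ∑ k, gradient (L k) w‖ ^ 2
        + (α * lr ^ 2 / 2) *
            ((K : ℝ)⁻¹ * ∑ k, ‖gradient (L k) w‖ ^ 2
              - ‖(K : ℝ)⁻¹ • ∑ k, gradient (L k) w‖ ^ 2) := by
  have hK0 : (K : ℝ) ≠ 0 := Nat.cast_ne_zero.mpr hK.ne'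
  have hKpos : (0 : ℝ) < K := Nat.cast_pos.2 hK
  set J : Fin K → EuclideanSpace ℝ (Fin n) := fun k => gradient (L k) w with hJ
  set Jb : EuclideanSpace ℝ (Fin n) := (K : ℝ)⁻¹ • ∑ k, J k with hJb
  set v : EuclideanSpace ℝ (Fin n) := -(lr • Jb) with hv
  -- aggregated point
  have hW : (K : ℝ)⁻¹ • ∑ j, (w - lr • J j) = w + v := by
    rw [Finset.sum_sub_distrib, Finset.sum_const, Finset.card_univ, Fintype.card_fin,
      ← Finset.smul_sum, smul_sub, hv, hJb, smul_smul, ← Nat.cast_smul_eq_nsmul ℝ, smul_smul,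
      inv_mul_cancel₀ hK0, one_smul, smul_smul, mul_comm, sub_eq_add_neg]
  -- norms
  have hvnorm : ‖v‖ ^ 2 = lr ^ 2 * ‖Jb‖ ^ 2 := by
    rw [hv, norm_neg, norm_smul, mul_pow, Real.norm_eq_abs, sq_abs]
  -- per-client descent
  have hk : ∀ k, L k (w + v) ≤ L k w + @inner ℝ _ _ (J k) v + α / 2 * ‖v‖ ^ 2 :=
    fun k => descent (L k) (hdiff k) hα.le (hlip k) w v
  -- sum of inner products
  have hinner : ∑ k, @inner ℝ _ _ (J k) v = -((K : ℝ) * (lr * ‖Jb‖ ^ 2)) := by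
    rw [← sum_inner]
    have h1 : (∑ k, J k) = (K : ℝ) • Jb := by
      rw [hJb, smul_smul, mul_inv_cancel₀ hK0, one_smul]
    rw [h1, hv, real_inner_smul_left, inner_neg_right, real_inner_smul_right,
      real_inner_self_eq_norm_sq]
    ring
  have hsum : ∑ k, L k (w + v) ≤
      ∑ k, L k w + (-((K : ℝ) * (lr * ‖Jb‖ ^ 2))) + (K : ℝ) * (α / 2 * ‖v‖ ^ 2) := by
    calc ∑ k, L k (w + v) ≤ ∑ k, (L k w + @inner ℝ _ _ (J k) v + α / 2 * ‖v‖ ^ 2) :=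
          Finset.sum_le_sum fun k _ => hk k
      _ = ∑ k, L k w + (-((K : ℝ) * (lr * ‖Jb‖ ^ 2))) + (K : ℝ) * (α / 2 * ‖v‖ ^ 2) := by
          rw [Finset.sum_add_distrib, Finset.sum_add_distrib, hinner, Finset.sum_const,
            Finset.card_univ, Fintype.card_fin, nsmul_eq_mul]
  -- variance nonneg
  have hvar : ‖Jb‖ ^ 2 ≤ (K : ℝ)⁻¹ * ∑ k, ‖J k‖ ^ 2 := by
    have h1 : ‖Jb‖ ≤ (K : ℝ)⁻¹ * ∑ k, ‖J k‖ := by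
      rw [hJb, norm_smul, Real.norm_eq_abs, abs_of_pos (inv_pos.2 hKpos)]
      exact mul_le_mul_of_nonneg_left (norm_sum_le _ _) (inv_pos.2 hKpos).le
    have h2 : (∑ k, ‖J k‖) ^ 2 ≤ (K : ℝ) * ∑ k, ‖J k‖ ^ 2 := by
      have := sq_sum_le_card_mul_sum_sq (s := (Finset.univ : Finset (Fin K)))
        (f := fun k => ‖J k‖)
      simpa [Finset.card_univ] using this
    have h3 : ‖Jb‖ ^ 2 ≤ ((K : ℝ)⁻¹ * ∑ k, ‖J k‖) ^ 2 :=
      pow_le_pow_left₀ (norm_nonneg _) h1 2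
    calc ‖Jb‖ ^ 2 ≤ ((K : ℝ)⁻¹ * ∑ k, ‖J k‖) ^ 2 := h3
      _ = (K : ℝ)⁻¹ * ((K : ℝ)⁻¹ * (∑ k, ‖J k‖) ^ 2) := by ring
      _ ≤ (K : ℝ)⁻¹ * ((K : ℝ)⁻¹ * ((K : ℝ) * ∑ k, ‖J k‖ ^ 2)) := by
          apply mul_le_mul_of_nonneg_left _ (inv_pos.2 hKpos).le
          exact mul_le_mul_of_nonneg_left h2 (inv_pos.2 hKpos).le
      _ = (K : ℝ)⁻¹ * ∑ k, ‖J k‖ ^ 2 := by field_simp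
  -- conclude
  rw [hW]
  have hmain : (K : ℝ)⁻¹ * ∑ k, L k (w + v) ≤
      (K : ℝ)⁻¹ * ∑ k, L k w - (lr - α * lr ^ 2 / 2) * ‖Jb‖ ^ 2 := by
    have := mul_le_mul_of_nonneg_left hsum (inv_pos.2 hKpos).le
    rw [hvnorm] at this
    calc (K : ℝ)⁻¹ * ∑ k, L k (w + v) ≤ (K : ℝ)⁻¹ *
          (∑ k, L k w + (-((K : ℝ) * (lr * ‖Jb‖ ^ 2))) + (K : ℝ) * (α / 2 * (lr ^ 2 * ‖Jb‖ ^ 2)))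
        := this
      _ = (K : ℝ)⁻¹ * ∑ k, L k w - (lr - α * lr ^ 2 / 2) * ‖Jb‖ ^ 2 := by
          field_simp
          ring
  have hpos : 0 ≤ (α * lr ^ 2 / 2) * ((K : ℝ)⁻¹ * ∑ k, ‖J k‖ ^ 2 - ‖Jb‖ ^ 2) := by
    apply mul_nonneg (by positivity)
    linarith
  linarith
end

section
/- Let L₁,…,L_K : ℝⁿ → ℝ be convex, differentiable with α-Lipschitz gradients, L = (1/K)∑ₖLₖ. Suppose P rounds of federated training are performed: starting from w₀, at each round p the clients perform one gradient step with common learning rate λ_{p+1} from the global weights w_p, and the server aggregates by averaging, producing w_{p+1} = w_p − λ_{p+1}·J_p where J_p = (1/K)∑ₖ∇Lₖ(w_p). Then L(w_P) ≤ L(w₀) − ∑_{p=0}^{P−1} β₁(λ_{p+1})‖J_p‖² + ∑_{p=0}^{P−1} β₂(λ_{p+1})σ_p², where σ_p² = (1/K)∑ₖ‖∇Lₖ(w_p)‖² − ‖J_p‖², β₂(λ) = αλ²/2, β₁(λ) = λ − β₂(λ). -/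
open Finset

local notation "⟪" x ", " y "⟫" => @inner ℝ _ _ x y

lemma descent_lemma {F : Type*} [NormedAddCommGroup F] [InnerProductSpace ℝ F] [CompleteSpace F]
    (f : F → ℝ) (hf : Differentiable ℝ f) (α : ℝ) (hα : 0 ≤ α)
    (hlip : ∀ x y, ‖gradient f x - gradient f y‖ ≤ α * ‖x - y‖)
    (x v : F) :
    f (x + v) ≤ f x + ⟪gradient f x, v⟫ + α / 2 * ‖v‖ ^ 2 := by
  set φ : ℝ → ℝ := fun t =>
    f x + t * ⟪gradient f x, v⟫ + α * t ^ 2 / 2 * ‖v‖ ^ 2 - f (x + t • v) with hφ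
  have hderφ : ∀ t : ℝ, HasDerivAt φ
      (⟪gradient f x, v⟫ + α * t * ‖v‖ ^ 2 - ⟪gradient f (x + t • v), v⟫) t := by
    intro t
    have hγ : HasDerivAt (fun t : ℝ => x + t • v) v t := by
      simpa using ((hasDerivAt_id t).smul_const v).const_add x
    have hfd : HasFDerivAt f (InnerProductSpace.toDual ℝ F (gradient f (x + t • v)))
        (x + t • v) := (hf _).hasGradientAt.hasFDerivAt
    have hcomp : HasDerivAt (fun t : ℝ => f (x + t • v))
        ⟪gradient f (x + t • v), v⟫ t := by
      have := hfd.comp_hasDerivAt t hγ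
      rw [InnerProductSpace.toDual_apply_apply] at this
      exact this
    have h1 : HasDerivAt (fun t : ℝ => f x + t * ⟪gradient f x, v⟫ + α * t ^ 2 / 2 * ‖v‖ ^ 2)
        (⟪gradient f x, v⟫ + α * t * ‖v‖ ^ 2) t := by
      have := (((hasDerivAt_id t).mul_const (⟪gradient f x, v⟫)).const_add (f x)).add
        ((((hasDerivAt_pow 2 t).const_mul α).div_const 2).mul_const (‖v‖ ^ 2))
      exact this.congr_deriv (by ring)
    exact h1.sub hcomp
  have hmono : MonotoneOn φ (Set.Icc (0 : ℝ) 1) := by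
    have hdφ : Differentiable ℝ φ := fun t => (hderφ t).differentiableAt
    apply monotoneOn_of_deriv_nonneg (convex_Icc 0 1) hdφ.continuous.continuousOn
      (fun t ht => (hdφ t).differentiableWithinAt)
    intro t ht
    rw [interior_Icc] at ht
    rw [(hderφ t).deriv]
    have h1 : ⟪gradient f (x + t • v) - gradient f x, v⟫ ≤ α * t * ‖v‖ ^ 2 := by
      calc ⟪gradient f (x + t • v) - gradient f x, v⟫
          ≤ ‖gradient f (x + t • v) - gradient f x‖ * ‖v‖ := real_inner_le_norm _ _
        _ ≤ α * ‖(x + t • v) - x‖ * ‖v‖ := by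
            gcongr; exact hlip _ _
        _ = α * t * ‖v‖ ^ 2 := by
            simp [norm_smul, abs_of_pos ht.1]; ring
    rw [inner_sub_left] at h1
    linarith
  have h01 := hmono (Set.mem_Icc.2 ⟨le_refl 0, zero_le_one⟩)
    (Set.mem_Icc.2 ⟨zero_le_one, le_refl 1⟩) zero_le_one
  simp only [hφ, zero_smul, one_smul, zero_pow, mul_zero, zero_mul, add_zero, zero_div,
    one_pow, mul_one, one_mul] at h01
  linarith

/-- Telescoped multi-round bound for single-step federated gradient descent
with averaging (Lemma 1 of the paper). -/
theorem fed_multi_round_bound {n K : ℕ} (hK : 0 < K) (α : ℝ) (hα : 0 < α) (P : ℕ)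
    (lr : ℕ → ℝ) (hlr : ∀ p, 0 < lr p)
    (L : Fin K → EuclideanSpace ℝ (Fin n) → ℝ)
    (hconv : ∀ k, ConvexOn ℝ Set.univ (L k))
    (hdiff : ∀ k, Differentiable ℝ (L k))
    (hlip : ∀ k w₁ w₂, ‖gradient (L k) w₁ - gradient (L k) w₂‖ ≤ α * ‖w₁ - w₂‖)
    (w : ℕ → EuclideanSpace ℝ (Fin n))
    (hupdate : ∀ p < P,
      w (p + 1) = w p - lr (p + 1) • ((K : ℝ)⁻¹ • ∑ k, gradient (L k) (w p))) :
    (K : ℝ)⁻¹ * ∑ k, L k (w P) ≤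
      (K : ℝ)⁻¹ * ∑ k, L k (w 0)
        - ∑ p ∈ Finset.range P,
            (lr (p + 1) - α * lr (p + 1) ^ 2 / 2) *
              ‖(K : ℝ)⁻¹ • ∑ k, gradient (L k) (w p)‖ ^ 2
        + ∑ p ∈ Finset.range P,
            (α * lr (p + 1) ^ 2 / 2) *
              ((K : ℝ)⁻¹ * ∑ k, ‖gradient (L k) (w p)‖ ^ 2
                - ‖(K : ℝ)⁻¹ • ∑ k, gradient (L k) (w p)‖ ^ 2) := by
  have hKR : (0 : ℝ) < (K : ℝ) := by exact_mod_cast hK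
  -- per-round bound
  have round : ∀ p < P,
      (K : ℝ)⁻¹ * ∑ k, L k (w (p + 1)) ≤
        (K : ℝ)⁻¹ * ∑ k, L k (w p)
          - (lr (p + 1) - α * lr (p + 1) ^ 2 / 2) *
              ‖(K : ℝ)⁻¹ • ∑ k, gradient (L k) (w p)‖ ^ 2
          + (α * lr (p + 1) ^ 2 / 2) *
              ((K : ℝ)⁻¹ * ∑ k, ‖gradient (L k) (w p)‖ ^ 2
                - ‖(K : ℝ)⁻¹ • ∑ k, gradient (L k) (w p)‖ ^ 2) := by
    intro p hp
    set J : EuclideanSpace ℝ (Fin n) := (K : ℝ)⁻¹ • ∑ k, gradient (L k) (w p) with hJ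
    set lam := lr (p + 1) with hlam
    have hupd : w (p + 1) = w p + (-(lam • J)) := by
      rw [hupdate p hp]; abel
    have hk : ∀ k, L k (w (p + 1)) ≤
        L k (w p) + ⟪gradient (L k) (w p), -(lam • J)⟫ + α / 2 * ‖-(lam • J)‖ ^ 2 := by
      intro k
      rw [hupd]
      exact descent_lemma (L k) (hdiff k) α hα.le (hlip k) (w p) _
    -- sum over k
    have hsum : ∑ k, L k (w (p + 1)) ≤
        ∑ k, L k (w p) + ⟪∑ k, gradient (L k) (w p), -(lam • J)⟫
          + (K : ℝ) * (α / 2 * ‖-(lam • J)‖ ^ 2) := by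
      calc ∑ k, L k (w (p + 1))
          ≤ ∑ k, (L k (w p) + ⟪gradient (L k) (w p), -(lam • J)⟫
              + α / 2 * ‖-(lam • J)‖ ^ 2) := Finset.sum_le_sum fun k _ => hk k
        _ = _ := by
            rw [Finset.sum_add_distrib, Finset.sum_add_distrib, sum_inner,
              Finset.sum_const, Finset.card_univ, Fintype.card_fin, nsmul_eq_mul]
    have hinner : ⟪∑ k, gradient (L k) (w p), -(lam • J)⟫ = -((K : ℝ) * (lam * ‖J‖ ^ 2)) := by
      have : (∑ k, gradient (L k) (w p)) = (K : ℝ) • J := by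
        rw [hJ, smul_smul, mul_inv_cancel₀ hKR.ne', one_smul]
      rw [this, inner_neg_right, inner_smul_left, inner_smul_right, real_inner_self_eq_norm_sq]
      simp [RCLike.conj_to_real]
    have hnorm : ‖-(lam • J)‖ ^ 2 = lam ^ 2 * ‖J‖ ^ 2 := by
      rw [norm_neg, norm_smul]
      simp [abs_of_pos (hlr (p + 1)), ← hlam]
      rw [mul_pow, sq_abs]
    -- key inequality after dividing by K
    have hmain : (K : ℝ)⁻¹ * ∑ k, L k (w (p + 1)) ≤
        (K : ℝ)⁻¹ * ∑ k, L k (w p) - lam * ‖J‖ ^ 2 + α * lam ^ 2 / 2 * ‖J‖ ^ 2 := by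
      rw [hinner, hnorm] at hsum
      have := mul_le_mul_of_nonneg_left hsum (inv_nonneg.2 hKR.le)
      calc (K : ℝ)⁻¹ * ∑ k, L k (w (p + 1))
          ≤ (K : ℝ)⁻¹ * (∑ k, L k (w p) + -((K : ℝ) * (lam * ‖J‖ ^ 2))
              + (K : ℝ) * (α / 2 * (lam ^ 2 * ‖J‖ ^ 2))) := this
        _ = (K : ℝ)⁻¹ * ∑ k, L k (w p) - lam * ‖J‖ ^ 2 + α * lam ^ 2 / 2 * ‖J‖ ^ 2 := by
            field_simp
            ring
    -- Jensen: ‖J‖² ≤ avg of ‖g_k‖²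
    have hjensen : ‖J‖ ^ 2 ≤ (K : ℝ)⁻¹ * ∑ k, ‖gradient (L k) (w p)‖ ^ 2 := by
      have h1 : ‖J‖ ≤ (K : ℝ)⁻¹ * ∑ k, ‖gradient (L k) (w p)‖ := by
        rw [hJ, norm_smul]
        gcongr
        · simp [abs_of_pos (inv_pos.2 hKR)]
        · exact norm_sum_le _ _
      have h2 : (∑ k, ‖gradient (L k) (w p)‖) ^ 2 ≤
          (K : ℝ) * ∑ k, ‖gradient (L k) (w p)‖ ^ 2 := by
        have := sq_sum_le_card_mul_sum_sq (s := (Finset.univ : Finset (Fin K)))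
          (f := fun k => ‖gradient (L k) (w p)‖)
        simpa using this
      calc ‖J‖ ^ 2 ≤ ((K : ℝ)⁻¹ * ∑ k, ‖gradient (L k) (w p)‖) ^ 2 := by
            apply sq_le_sq' _ h1
            have : (0:ℝ) ≤ (K : ℝ)⁻¹ * ∑ k, ‖gradient (L k) (w p)‖ := by positivity
            linarith [norm_nonneg J]
        _ = (K : ℝ)⁻¹ ^ 2 * (∑ k, ‖gradient (L k) (w p)‖) ^ 2 := by ring
        _ ≤ (K : ℝ)⁻¹ ^ 2 * ((K : ℝ) * ∑ k, ‖gradient (L k) (w p)‖ ^ 2) := by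
            gcongr
        _ = (K : ℝ)⁻¹ * ∑ k, ‖gradient (L k) (w p)‖ ^ 2 := by
            field_simp
    have hcoef : (0:ℝ) ≤ α * lam ^ 2 / 2 := by positivity
    nlinarith [mul_le_mul_of_nonneg_left hjensen hcoef]
  -- telescope by induction
  have key : ∀ m, m ≤ P →
      (K : ℝ)⁻¹ * ∑ k, L k (w m) ≤
        (K : ℝ)⁻¹ * ∑ k, L k (w 0)
          - ∑ p ∈ Finset.range m,
              (lr (p + 1) - α * lr (p + 1) ^ 2 / 2) *
                ‖(K : ℝ)⁻¹ • ∑ k, gradient (L k) (w p)‖ ^ 2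
          + ∑ p ∈ Finset.range m,
              (α * lr (p + 1) ^ 2 / 2) *
                ((K : ℝ)⁻¹ * ∑ k, ‖gradient (L k) (w p)‖ ^ 2
                  - ‖(K : ℝ)⁻¹ • ∑ k, gradient (L k) (w p)‖ ^ 2) := by
    intro m
    induction m with
    | zero => simp
    | succ m ih =>
        intro hm
        have hmP : m < P := hm
        have h1 := ih (Nat.le_of_lt hmP)
        have h2 := round m hmP
        rw [Finset.sum_range_succ, Finset.sum_range_succ]
        linarith
  exact key P le_rfl
end

section
/- Let K clients have convex losses (in model weights) L₁,…,L_K on domains D⁽¹⁾,…,D⁽ᴷ⁾, with optimal local models h*⁽ᵏ⁾ having weights w*⁽ᵏ⁾, and let the global model h* have weights w* = (1/K)∑ₖ w*⁽ᵏ⁾. Then the federated source loss satisfies L_src(h*) := (1/K)∑ₖ L_{D⁽ᵏ⁾}(h*) ≤ (1/K)∑ₖ L_{D⁽ᵏ⁾}(h*⁽ᵏ⁾) + d̄_H(D_S^{fed}), where d̄_H(D_S^{fed}) = (1/(K(K−1)))∑_{k₁≠k₂} d_H(D⁽ᵏ¹⁾,D⁽ᵏ²⁾). -/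
/-- Federated source loss bound (Lemma in the paper): with convex local losses in the
model weights and averaging aggregation, the federated source loss of the global model
is bounded by the average of the optimal local losses plus the cross-client divergence.
Here models are parameterized by weights in `E`; `Lpop k w` is the population loss of
the model with weights `w` on client domain `D⁽ᵏ⁾`, and the hypothesis class `H` is
a set of weights containing all optimal local models `wstar k`. -/
theorem fed_source_loss_le_avg_local_add_crossClientDiv
    {E : Type*} [AddCommGroup E] [Module ℝ E] {K : ℕ} (hK : 2 ≤ K)
    (Lpop : Fin K → E → ℝ) (wstar : Fin K → E) (H : Set E)
    (hconv : ∀ k, ConvexOn ℝ Set.univ (Lpop k))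
    (hmem : ∀ k, wstar k ∈ H)
    (hbdd : ∀ k₁ k₂ : Fin K, BddAbove ((fun w => |Lpop k₁ w - Lpop k₂ w|) '' H)) :
    (K : ℝ)⁻¹ * ∑ k, Lpop k ((K : ℝ)⁻¹ • ∑ j, wstar j) ≤
      (K : ℝ)⁻¹ * ∑ k, Lpop k (wstar k)
        + (1 / ((K : ℝ) * ((K : ℝ) - 1))) *
            ∑ p ∈ Finset.univ.filter (fun p : Fin K × Fin K => p.1 ≠ p.2),
              sSup ((fun w => |Lpop p.1 w - Lpop p.2 w|) '' H) := by
  set d : Fin K → Fin K → ℝ := fun k j => sSup ((fun w => |Lpop k w - Lpop j w|) '' H) with hd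
  have hK2 : (2:ℝ) ≤ (K:ℝ) := by exact_mod_cast hK
  have hKpos : (0:ℝ) < (K:ℝ) := by linarith
  have hKne : (K:ℝ) ≠ 0 := ne_of_gt hKpos
  have hdnonneg : ∀ k j, 0 ≤ d k j := fun k j =>
    le_trans (abs_nonneg _) (le_csSup (hbdd k j) ⟨wstar k, hmem k, rfl⟩)
  have hdiag : ∀ k, d k k = 0 := by
    intro k
    refine le_antisymm ?_ (hdnonneg k k)
    apply Real.sSup_le _ le_rfl
    rintro x ⟨w, -, rfl⟩
    simp
  have hcross : ∀ k j, Lpop k (wstar j) ≤ Lpop j (wstar j) + d k j := by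
    intro k j
    have h1 : Lpop k (wstar j) - Lpop j (wstar j) ≤ d k j :=
      le_trans (le_abs_self _) (le_csSup (hbdd k j) ⟨wstar j, hmem j, rfl⟩)
    linarith
  have hsum1 : ∑ _j : Fin K, (K:ℝ)⁻¹ = 1 := by
    simp [Finset.sum_const, Finset.card_univ]
    field_simp
  have hjensen : ∀ k, Lpop k ((K:ℝ)⁻¹ • ∑ j, wstar j) ≤ ∑ j, (K:ℝ)⁻¹ * Lpop k (wstar j) := by
    intro k
    have h := (hconv k).map_sum_le (t := Finset.univ) (w := fun _ => (K:ℝ)⁻¹)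
      (fun _ _ => by positivity) hsum1 (fun i _ => Set.mem_univ (wstar i))
    have heq : ∑ j, (K:ℝ)⁻¹ • wstar j = (K:ℝ)⁻¹ • ∑ j, wstar j := (Finset.smul_sum).symm
    simpa [heq, smul_eq_mul] using h
  have hstep : ∀ k, Lpop k ((K:ℝ)⁻¹ • ∑ j, wstar j)
      ≤ (K:ℝ)⁻¹ * ∑ j, Lpop j (wstar j) + (K:ℝ)⁻¹ * ∑ j, d k j := by
    intro k
    refine (hjensen k).trans ?_
    calc ∑ j, (K:ℝ)⁻¹ * Lpop k (wstar j)
        ≤ ∑ j, (K:ℝ)⁻¹ * (Lpop j (wstar j) + d k j) := by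
          apply Finset.sum_le_sum
          intro j _
          have h := hcross k j
          have hi : (0:ℝ) ≤ (K:ℝ)⁻¹ := by positivity
          nlinarith
      _ = (K:ℝ)⁻¹ * ∑ j, Lpop j (wstar j) + (K:ℝ)⁻¹ * ∑ j, d k j := by
          rw [← Finset.mul_sum, ← mul_add, ← Finset.sum_add_distrib]
  have hT : ∑ k, ∑ j, d k j
      = ∑ p ∈ Finset.univ.filter (fun p : Fin K × Fin K => p.1 ≠ p.2), d p.1 p.2 := by
    rw [← Finset.sum_product']
    rw [← Finset.sum_filter_add_sum_filter_not (Finset.univ ×ˢ Finset.univ)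
      (fun p : Fin K × Fin K => p.1 ≠ p.2)]
    have hz : ∑ p ∈ (Finset.univ ×ˢ Finset.univ).filter (fun p : Fin K × Fin K => ¬ p.1 ≠ p.2),
        d p.1 p.2 = 0 := by
      apply Finset.sum_eq_zero
      intro p hp
      simp only [Finset.mem_filter, not_not] at hp
      rw [hp.2, hdiag]
    rw [hz, add_zero, Finset.univ_product_univ]
  have hTnn : 0 ≤ ∑ k, ∑ j, d k j :=
    Finset.sum_nonneg fun k _ => Finset.sum_nonneg fun j _ => hdnonneg k j
  set S : ℝ := ∑ j, Lpop j (wstar j) with hS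
  have hsumstep : ∑ k, Lpop k ((K:ℝ)⁻¹ • ∑ j, wstar j)
      ≤ (K:ℝ) * ((K:ℝ)⁻¹ * S) + (K:ℝ)⁻¹ * ∑ k, ∑ j, d k j := by
    calc ∑ k, Lpop k ((K:ℝ)⁻¹ • ∑ j, wstar j)
        ≤ ∑ k : Fin K, ((K:ℝ)⁻¹ * S + (K:ℝ)⁻¹ * ∑ j, d k j) :=
          Finset.sum_le_sum fun k _ => hstep k
      _ = (K:ℝ) * ((K:ℝ)⁻¹ * S) + (K:ℝ)⁻¹ * ∑ k, ∑ j, d k j := by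
          rw [Finset.sum_add_distrib, Finset.sum_const, Finset.card_univ, Fintype.card_fin,
            nsmul_eq_mul, ← Finset.mul_sum]
  have hpos2 : 0 < (K:ℝ) * ((K:ℝ) - 1) := by nlinarith
  have hle : (K:ℝ)⁻¹ * (K:ℝ)⁻¹ ≤ 1 / ((K:ℝ) * ((K:ℝ) - 1)) := by
    have h1 : (K:ℝ)⁻¹ * (K:ℝ)⁻¹ = 1 / ((K:ℝ) * (K:ℝ)) := by field_simp
    rw [h1, div_le_div_iff₀ (by positivity) hpos2]
    nlinarith
  calc (K:ℝ)⁻¹ * ∑ k, Lpop k ((K:ℝ)⁻¹ • ∑ j, wstar j)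
      ≤ (K:ℝ)⁻¹ * ((K:ℝ) * ((K:ℝ)⁻¹ * S) + (K:ℝ)⁻¹ * ∑ k, ∑ j, d k j) :=
        mul_le_mul_of_nonneg_left hsumstep (by positivity)
    _ = (K:ℝ)⁻¹ * S + ((K:ℝ)⁻¹ * (K:ℝ)⁻¹) * ∑ k, ∑ j, d k j := by field_simp
    _ ≤ (K:ℝ)⁻¹ * S + (1 / ((K:ℝ) * ((K:ℝ) - 1))) * ∑ k, ∑ j, d k j :=
        add_le_add le_rfl (mul_le_mul_of_nonneg_right hle hTnn)
    _ = _ := by rw [hT]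
end

section
/- Under convexity of the loss in the weights and averaging aggregation, the optimal target loss of transferable federated learning is bounded as L*_tgt ≤ (1/K)∑ₖ L_{D⁽ᵏ⁾}(h*⁽ᵏ⁾) + d̄_H(D_S^{fed}) + d_{G,F}(D_S^{fed}, D_T), where d_{G,F}(D_S^{fed}, D_T) = (1/K)∑ₖ d_{G,F}(D⁽ᵏ⁾, D_T). -/
open MeasureTheory

/-- Population loss of hypothesis `h` on distribution `D`. -/
noncomputable def popLoss {X Y : Type*} [MeasurableSpace X] [MeasurableSpace Y]
    (l : Y → Y → ℝ) (D : Measure (X × Y)) (h : X → Y) : ℝ :=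
  ∫ p, l (h p.1) p.2 ∂D

/-- The `H`-discrepancy between two distributions. -/
noncomputable def discrepancyH {X Y : Type*} [MeasurableSpace X] [MeasurableSpace Y]
    (l : Y → Y → ℝ) (H : Set (X → Y)) (D₁ D₂ : Measure (X × Y)) : ℝ :=
  sSup ((fun h => |popLoss l D₁ h - popLoss l D₂ h|) '' H)

/-- Best loss of a classifier in `G` composed with feature extractor `f` on `D`. -/
noncomputable def infLoss {X Z Y : Type*} [MeasurableSpace X] [MeasurableSpace Y]
    (l : Y → Y → ℝ) (G : Set (Z → Y)) (D : Measure (X × Y)) (f : X → Z) : ℝ :=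
  sInf ((fun g => popLoss l D (fun x => g (f x))) '' G)

/-- The `(G,F)`-discrepancy between source and target. -/
noncomputable def dGF {X Z Y : Type*} [MeasurableSpace X] [MeasurableSpace Y]
    (l : Y → Y → ℝ) (G : Set (Z → Y)) (F : Set (X → Z))
    (DS DT : Measure (X × Y)) : ℝ :=
  sSup ((fun f => |infLoss l G DS f - infLoss l G DT f|) '' F)

/-- If the loss is uniformly bounded, the population loss on a probability
measure is bounded in absolute value. -/
lemma abs_popLoss_le {X Y : Type*} [MeasurableSpace X] [MeasurableSpace Y]
    {l : Y → Y → ℝ} {C : ℝ} (hC : ∀ y₁ y₂, |l y₁ y₂| ≤ C)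
    (D : Measure (X × Y)) [IsProbabilityMeasure D] (h : X → Y) :
    |popLoss l D h| ≤ C := by
  have := norm_integral_le_of_norm_le_const (μ := D)
      (f := fun p : X × Y => l (h p.1) p.2) (C := C)
      (Filter.Eventually.of_forall fun p => by
        simpa [Real.norm_eq_abs] using hC (h p.1) p.2)
  simpa [popLoss, Real.norm_eq_abs] using this

/-- If the loss is uniformly bounded, the optimal classifier loss is bounded. -/
lemma abs_infLoss_le {X Z Y : Type*} [MeasurableSpace X] [MeasurableSpace Y]
    {l : Y → Y → ℝ} {C : ℝ} (hC : ∀ y₁ y₂, |l y₁ y₂| ≤ C)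
    {G : Set (Z → Y)} (hG : G.Nonempty)
    (D : Measure (X × Y)) [IsProbabilityMeasure D] (f : X → Z) :
    |infLoss l G D f| ≤ C := by
  have hbdd : ∀ r ∈ (fun g : Z → Y => popLoss l D (fun x => g (f x))) '' G,
      -C ≤ r ∧ r ≤ C := by
    rintro r ⟨g, hg, rfl⟩
    exact abs_le.mp (abs_popLoss_le hC D _)
  have hne : ((fun g : Z → Y => popLoss l D (fun x => g (f x))) '' G).Nonempty :=
    hG.image _
  rw [abs_le]
  refine ⟨le_csInf hne fun r hr => (hbdd r hr).1, ?_⟩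
  obtain ⟨r, hr⟩ := hne
  exact le_trans (csInf_le ⟨-C, fun s hs => (hbdd s hs).1⟩ hr) (hbdd r hr).2

/-- Theorem 1 of the paper: the optimal target loss of transferable federated
learning is bounded by the average optimal local loss, plus the cross-client
divergence, plus the averaged source-target `(G,F)`-discrepancy. Models are
parameterized by weights in `E`, split into a feature extractor `feat w` and a
classifier `clf w`; the global weights are obtained by averaging the optimal
local weights `wstar k`. -/
theorem optimal_target_loss_bound {X Z Y : Type*} [MeasurableSpace X]
    [MeasurableSpace Y] {E : Type*} [AddCommGroup E] [Module ℝ E]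
    (l : Y → Y → ℝ) (hbound : ∃ C, ∀ y₁ y₂ : Y, |l y₁ y₂| ≤ C)
    (feat : E → X → Z) (clf : E → Z → Y)
    (F : Set (X → Z)) (G : Set (Z → Y)) (H : Set (X → Y)) (hG : G.Nonempty)
    {K : ℕ} (hK : 2 ≤ K) (D : Fin K → Measure (X × Y)) (DT : Measure (X × Y))
    (hprob : ∀ k, IsProbabilityMeasure (D k)) [IsProbabilityMeasure DT]
    (wstar : Fin K → E)
    (hfF : feat ((K : ℝ)⁻¹ • ∑ k, wstar k) ∈ F)
    (hgG : clf ((K : ℝ)⁻¹ • ∑ k, wstar k) ∈ G)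
    (hH : ∀ k, (fun x => clf (wstar k) (feat (wstar k) x)) ∈ H)
    (hconv : ∀ k, ConvexOn ℝ Set.univ
      (fun w => popLoss l (D k) (fun x => clf w (feat w x)))) :
    infLoss l G DT (feat ((K : ℝ)⁻¹ • ∑ k, wstar k)) ≤
      (K : ℝ)⁻¹ * ∑ k, popLoss l (D k) (fun x => clf (wstar k) (feat (wstar k) x))
        + (1 / ((K : ℝ) * ((K : ℝ) - 1))) *
            ∑ p ∈ Finset.univ.filter (fun p : Fin K × Fin K => p.1 ≠ p.2),
              discrepancyH l H (D p.1) (D p.2)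
        + (K : ℝ)⁻¹ * ∑ k, dGF l G F (D k) DT := by
  classical
  obtain ⟨C, hC⟩ := hbound
  haveI hP := hprob
  -- Y is nonempty since DT is a probability measure
  have hneXY : Nonempty (X × Y) := by
    by_contra h
    rw [not_nonempty_iff] at h
    have h1 : DT Set.univ = 1 := measure_univ
    rw [Set.univ_eq_empty_iff.mpr h] at h1
    simp at h1
  obtain ⟨⟨x0, y0⟩⟩ := hneXY
  have hC0 : 0 ≤ C := le_trans (abs_nonneg _) (hC y0 y0)
  have hKpos : (0:ℝ) < (K:ℝ) := by
    have : (0:ℕ) < K := by omega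
    exact_mod_cast this
  set wbar : E := (K : ℝ)⁻¹ • ∑ k, wstar k with hwbar
  set P : Fin K → ℝ :=
    fun j => popLoss l (D j) (fun x => clf (wstar j) (feat (wstar j) x)) with hP'
  set d : Fin K → Fin K → ℝ := fun k j => discrepancyH l H (D k) (D j) with hd
  -- boundedness facts
  have habs : ∀ k (h : X → Y), |popLoss l (D k) h| ≤ C := fun k h =>
    abs_popLoss_le hC (D k) h
  have hdiscBdd : ∀ k j, BddAbove
      ((fun h => |popLoss l (D k) h - popLoss l (D j) h|) '' H) := by
    intro k j
    refine ⟨C + C, ?_⟩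
    rintro r ⟨h, hh, rfl⟩
    exact le_trans (abs_sub _ _) (add_le_add (habs k h) (habs j h))
  have hdnonneg : ∀ k j, 0 ≤ d k j := by
    intro k j
    have hmem := le_csSup (hdiscBdd k j) (Set.mem_image_of_mem
      (fun h => |popLoss l (D k) h - popLoss l (D j) h|) (hH k))
    exact le_trans (abs_nonneg _) hmem
  -- Step 1: target inf loss vs each source inf loss via dGF
  have key1 : ∀ k, infLoss l G DT (feat wbar) ≤
      infLoss l G (D k) (feat wbar) + dGF l G F (D k) DT := by
    intro k
    have hbddF : BddAbove
        ((fun f => |infLoss l G (D k) f - infLoss l G DT f|) '' F) := by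
      refine ⟨C + C, ?_⟩
      rintro r ⟨f, hf, rfl⟩
      exact le_trans (abs_sub _ _)
        (add_le_add (abs_infLoss_le hC hG (D k) f) (abs_infLoss_le hC hG DT f))
    have hmem : |infLoss l G (D k) (feat wbar) - infLoss l G DT (feat wbar)| ≤
        dGF l G F (D k) DT :=
      le_csSup hbddF (Set.mem_image_of_mem _ hfF)
    have h2 : infLoss l G DT (feat wbar) - infLoss l G (D k) (feat wbar) ≤
        |infLoss l G (D k) (feat wbar) - infLoss l G DT (feat wbar)| := by
      rw [abs_sub_comm]; exact le_abs_self _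
    linarith
  -- Step 2: source inf loss ≤ loss of the averaged model
  have key2 : ∀ k, infLoss l G (D k) (feat wbar) ≤
      popLoss l (D k) (fun x => clf wbar (feat wbar x)) := by
    intro k
    refine csInf_le ⟨-C, ?_⟩ (Set.mem_image_of_mem _ hgG)
    rintro r ⟨g, hg, rfl⟩
    exact (abs_le.mp (habs k _)).1
  -- Step 3: convexity (Jensen)
  have key3 : ∀ k, popLoss l (D k) (fun x => clf wbar (feat wbar x)) ≤
      ∑ j, (K:ℝ)⁻¹ * popLoss l (D k) (fun x => clf (wstar j) (feat (wstar j) x)) := by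
    intro k
    have hsum1 : ∑ _j : Fin K, (K:ℝ)⁻¹ = 1 := by
      rw [Finset.sum_const, Finset.card_univ, Fintype.card_fin, nsmul_eq_mul]
      field_simp
    have := (hconv k).map_sum_le (t := Finset.univ) (w := fun _ => (K:ℝ)⁻¹)
      (p := wstar) (fun _ _ => by positivity) hsum1 (fun _ _ => Set.mem_univ _)
    have heq : ∑ j : Fin K, (K:ℝ)⁻¹ • wstar j = wbar := by
      rw [hwbar, Finset.smul_sum]
    rw [heq] at this
    simpa [smul_eq_mul] using this
  -- Step 4: move each client loss to its own distribution
  have key4 : ∀ k j,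
      popLoss l (D k) (fun x => clf (wstar j) (feat (wstar j) x)) ≤ P j + d k j := by
    intro k j
    have hmem : |popLoss l (D k) (fun x => clf (wstar j) (feat (wstar j) x)) -
        popLoss l (D j) (fun x => clf (wstar j) (feat (wstar j) x))| ≤ d k j :=
      le_csSup (hdiscBdd k j) (Set.mem_image_of_mem _ (hH j))
    have := le_abs_self (popLoss l (D k) (fun x => clf (wstar j) (feat (wstar j) x)) -
        popLoss l (D j) (fun x => clf (wstar j) (feat (wstar j) x)))
    simp only [hP']
    linarith
  -- diagonal discrepancies are ≤ 0 (in fact 0)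
  have hdiag : ∀ k, d k k ≤ 0 := by
    intro k
    refine csSup_le ⟨|popLoss l (D k) (fun x => clf (wstar k) (feat (wstar k) x)) -
        popLoss l (D k) (fun x => clf (wstar k) (feat (wstar k) x))|,
        Set.mem_image_of_mem _ (hH k)⟩ ?_
    rintro r ⟨h, hh, rfl⟩
    simp
  -- assemble
  have main : infLoss l G DT (feat wbar) ≤
      (K:ℝ)⁻¹ * ∑ k, (∑ j, (K:ℝ)⁻¹ * (P j + d k j)) + (K:ℝ)⁻¹ * ∑ k, dGF l G F (D k) DT := by
    have h1 : infLoss l G DT (feat wbar) =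
        (K:ℝ)⁻¹ * ∑ _k : Fin K, infLoss l G DT (feat wbar) := by
      rw [Finset.sum_const, Finset.card_univ, Fintype.card_fin, nsmul_eq_mul]
      field_simp
    rw [h1]
    have h2 : ∀ k : Fin K, infLoss l G DT (feat wbar) ≤
        (∑ j, (K:ℝ)⁻¹ * (P j + d k j)) + dGF l G F (D k) DT := by
      intro k
      refine le_trans (key1 k) (add_le_add ?_ le_rfl)
      refine le_trans (key2 k) (le_trans (key3 k) ?_)
      exact Finset.sum_le_sum fun j _ => by
        have := key4 k j
        have hKi : (0:ℝ) ≤ (K:ℝ)⁻¹ := by positivity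
        nlinarith [key4 k j]
    calc (K:ℝ)⁻¹ * ∑ _k : Fin K, infLoss l G DT (feat wbar)
        ≤ (K:ℝ)⁻¹ * ∑ k, ((∑ j, (K:ℝ)⁻¹ * (P j + d k j)) + dGF l G F (D k) DT) := by
          refine mul_le_mul_of_nonneg_left (Finset.sum_le_sum fun k _ => h2 k) (by positivity)
      _ = (K:ℝ)⁻¹ * ∑ k, (∑ j, (K:ℝ)⁻¹ * (P j + d k j))
            + (K:ℝ)⁻¹ * ∑ k, dGF l G F (D k) DT := by
          rw [Finset.sum_add_distrib, mul_add]
  -- now simplify the double sum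
  have hdouble : (K:ℝ)⁻¹ * ∑ k, (∑ j, (K:ℝ)⁻¹ * (P j + d k j)) ≤
      (K:ℝ)⁻¹ * ∑ j, P j
        + (1 / ((K:ℝ) * ((K:ℝ) - 1))) *
            ∑ p ∈ Finset.univ.filter (fun p : Fin K × Fin K => p.1 ≠ p.2), d p.1 p.2 := by
    have hsplit : ∀ k : Fin K, ∑ j, (K:ℝ)⁻¹ * (P j + d k j) =
        (K:ℝ)⁻¹ * ((∑ j, P j) + ∑ j, d k j) := by
      intro k
      rw [← Finset.mul_sum, Finset.sum_add_distrib, mul_add]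
    simp only [hsplit]
    rw [← Finset.mul_sum, Finset.sum_add_distrib, Finset.sum_const, Finset.card_univ,
      Fintype.card_fin, nsmul_eq_mul]
    -- bound the full double sum of d by the off-diagonal sum
    have hS : ∑ k : Fin K, ∑ j : Fin K, d k j ≤
        ∑ p ∈ Finset.univ.filter (fun p : Fin K × Fin K => p.1 ≠ p.2), d p.1 p.2 := by
      have hprod : (∑ k : Fin K, ∑ j : Fin K, d k j) =
          ∑ p : Fin K × Fin K, d p.1 p.2 :=
        (Fintype.sum_prod_type (f := fun p : Fin K × Fin K => d p.1 p.2)).symm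
      rw [hprod]
      rw [← Finset.sum_filter_add_sum_filter_not Finset.univ
        (fun p : Fin K × Fin K => p.1 ≠ p.2) (fun p => d p.1 p.2)]
      have hneg : ∑ p ∈ Finset.univ.filter
          (fun p : Fin K × Fin K => ¬ p.1 ≠ p.2), d p.1 p.2 ≤ 0 := by
        refine Finset.sum_nonpos ?_
        rintro ⟨a, b⟩ hp
        simp only [Finset.mem_filter, not_not] at hp
        rcases hp with ⟨-, rfl⟩
        exact hdiag a
      linarith
    set S := ∑ p ∈ Finset.univ.filter (fun p : Fin K × Fin K => p.1 ≠ p.2), d p.1 p.2 with hSdef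
    have hSnonneg : (0:ℝ) ≤ S := by
      refine Finset.sum_nonneg fun p _ => hdnonneg p.1 p.2
    have hdd : ∑ k : Fin K, ∑ j : Fin K, d k j ≤ S := hS
    have hK1 : (1:ℝ) ≤ (K:ℝ) - 1 := by
      have : (2:ℝ) ≤ (K:ℝ) := by exact_mod_cast hK
      linarith
    have hcoef : (K:ℝ)⁻¹ * (K:ℝ)⁻¹ ≤ 1 / ((K:ℝ) * ((K:ℝ) - 1)) := by
      have h1 : (K:ℝ)⁻¹ * (K:ℝ)⁻¹ = ((K:ℝ) * (K:ℝ))⁻¹ := (mul_inv _ _).symm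
      rw [h1, one_div]
      exact inv_anti₀ (by nlinarith) (by nlinarith)
    calc (K:ℝ)⁻¹ * ((K:ℝ)⁻¹ * ((K:ℝ) * ∑ j, P j + ∑ k : Fin K, ∑ j : Fin K, d k j))
        = (K:ℝ)⁻¹ * ∑ j, P j + (K:ℝ)⁻¹ * (K:ℝ)⁻¹ * (∑ k : Fin K, ∑ j : Fin K, d k j) := by
          field_simp
      _ ≤ (K:ℝ)⁻¹ * ∑ j, P j + (1 / ((K:ℝ) * ((K:ℝ) - 1))) * S := by
          have h3 : (K:ℝ)⁻¹ * (K:ℝ)⁻¹ * (∑ k : Fin K, ∑ j : Fin K, d k j) ≤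
              (1 / ((K:ℝ) * ((K:ℝ) - 1))) * S := by
            calc (K:ℝ)⁻¹ * (K:ℝ)⁻¹ * (∑ k : Fin K, ∑ j : Fin K, d k j)
                ≤ (K:ℝ)⁻¹ * (K:ℝ)⁻¹ * S :=
                  mul_le_mul_of_nonneg_left hdd (by positivity)
              _ ≤ (1 / ((K:ℝ) * ((K:ℝ) - 1))) * S :=
                  mul_le_mul_of_nonneg_right hcoef hSnonneg
          linarith
  calc infLoss l G DT (feat wbar)
      ≤ (K:ℝ)⁻¹ * ∑ k, (∑ j, (K:ℝ)⁻¹ * (P j + d k j))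
          + (K:ℝ)⁻¹ * ∑ k, dGF l G F (D k) DT := main
    _ ≤ (K:ℝ)⁻¹ * ∑ j, P j
          + (1 / ((K:ℝ) * ((K:ℝ) - 1))) *
              ∑ p ∈ Finset.univ.filter (fun p : Fin K × Fin K => p.1 ≠ p.2), d p.1 p.2
          + (K:ℝ)⁻¹ * ∑ k, dGF l G F (D k) DT := by
        linarith [hdouble]
end
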